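/- arXiv:0903.0258 — 4 statements merged into one kernel-verified Lean document; each statement's English description precedes it below -/
import Mathlib

section
/- Let F be an injective cellular automaton on finite configurations in dimension d. Then the linearization F̃ of F is uniformly local if and only if F is reversible. -/
/-! If `F̃` is uniformly local with neighbourhood `𝒩` and `F x`, `F y` differ exactly on the finite
set `𝒜`, then `x` and `y` agree outside `𝒜 + 𝒩`: otherwise the pure states `(e x ± e y)/√2` have
the same reduction to `𝒜 + 𝒩`, while the reductions of their images to `𝒜` carry opposite
coherences between `F x` and `F y`. Hence `-𝒩` is a neighbourhood for the inverse of `F`.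

Conversely, let `F` have neighbourhood `NC` and its inverse neighbourhood `NI`. The entry `(u, u')`
of the reduction of `F̃ ψ` to `𝒜` sums `ψ x * conj (ψ y)` over the pairs whose images read `u`,
`u'` on `𝒜` and agree elsewhere. Such `x` and `y` agree outside `𝒜 - NI`, and for a large enough
finite `S ⊇ 𝒜 - NI` whether they contribute only depends on their restrictions to `S`; so the
entry is a fixed linear combination of entries of the reduction of `ψ` to `S`. -/

open scoped Pointwise ComplexConjugate
open Classical

noncomputable section

variable (d : ℕ) (A : Type) (q : A)

/-- Finite configurations over `ℤ^d`. -/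
def Cf : Type := {c : (Fin d → ℤ) → A // {i | c i ≠ q}.Finite}

/-- Restrictions to `S` of finite configurations. -/
def Rst (S : Set (Fin d → ℤ)) : Type := {u : S → A // {i | u i ≠ q}.Finite}

variable {d A q}

def restr (S : Set (Fin d → ℤ)) (c : Cf d A q) : Rst d A q S :=
  ⟨fun i => c.1 i, c.2.preimage Subtype.val_injective.injOn⟩

def glue {S : Set (Fin d → ℤ)} (u : Rst d A q S) (v : Rst d A q Sᶜ) : Cf d A q :=
  ⟨fun i => if h : i ∈ S then u.1 ⟨i, h⟩ else v.1 ⟨i, h⟩, by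
    apply Set.Finite.subset ((u.2.image Subtype.val).union (v.2.image Subtype.val))
    intro i hi
    by_cases h : i ∈ S
    · exact Or.inl ⟨⟨i, h⟩, by simpa [h] using hi, rfl⟩
    · exact Or.inr ⟨⟨i, h⟩, by simpa [h] using hi, rfl⟩⟩

/-- The Hilbert space `ℓ²(C_f, ℂ)`. -/
abbrev Hd (d : ℕ) (A : Type) (q : A) : Type := lp (fun _ : Cf d A q => ℂ) 2

/-- Canonical basis vector. -/
def e (c : Cf d A q) : Hd d A q := lp.single 2 c 1

/-- A state: countable convex combination of an orthonormal family of pure states. -/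
structure State (H : Type) [NormedAddCommGroup H] [InnerProductSpace ℂ H] where
  ψ : ℕ → H
  p : ℕ → ℝ
  nonneg : ∀ k, 0 ≤ p k
  sum_one : HasSum p 1
  ortho : ∀ j k, p j ≠ 0 → p k ≠ 0 → (inner ℂ (ψ j) (ψ k) : ℂ) = if j = k then 1 else 0

/-- Reduction to `S` of the mixture of the family `ψ` with weights `p`. -/
def redFam (p : ℕ → ℝ) (ψ : ℕ → Hd d A q) (S : Set (Fin d → ℤ)) :
    Rst d A q S → Rst d A q S → ℂ := fun u u' =>
  ∑' k, (p k : ℂ) * ∑' v : Rst d A q Sᶜ, (ψ k) (glue u v) * conj ((ψ k) (glue u' v))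

def reduct (ρ : State (Hd d A q)) (S : Set (Fin d → ℤ)) :
    Rst d A q S → Rst d A q S → ℂ := redFam ρ.p ρ.ψ S

def redApply (G : Hd d A q →L[ℂ] Hd d A q) (ρ : State (Hd d A q)) (S : Set (Fin d → ℤ)) :
    Rst d A q S → Rst d A q S → ℂ := redFam ρ.p (fun k => G (ρ.ψ k)) S

/-- `G` is local at `𝒜` with neighbourhood `𝒩`. -/
def LocalAt (G : Hd d A q →L[ℂ] Hd d A q) (𝒜 𝒩 : Set (Fin d → ℤ)) : Prop :=
  ∀ ρ ρ' : State (Hd d A q), reduct ρ (𝒜 + 𝒩) = reduct ρ' (𝒜 + 𝒩) →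
    redApply G ρ 𝒜 = redApply G ρ' 𝒜

/-- `F` is a cellular automaton. -/
def IsCA (F : Cf d A q → Cf d A q) : Prop :=
  ∃ (N : Set (Fin d → ℤ)) (_ : N.Finite) (f : (N → A) → A),
    f (fun _ => q) = q ∧ ∀ c i, (F c).1 i = f (fun n => c.1 (i + n.1))

/-- `F` is reversible. -/
def Reversible (F : Cf d A q → Cf d A q) : Prop :=
  ∃ NI : Set (Fin d → ℤ), NI.Finite ∧ ∀ x y : Cf d A q, ∀ i : Fin d → ℤ,
    (∀ n ∈ NI, (F x).1 (i + n) = (F y).1 (i + n)) → x.1 i = y.1 i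

open scoped lp

section Configurations

variable {d : ℕ} {A : Type} {q : A}

lemma Cf.finite_setOf_ne (x y : Cf d A q) : {i | x.1 i ≠ y.1 i}.Finite :=
  (x.2.union y.2).subset fun i hi => by
    by_contra h
    simp only [Set.mem_union, Set.mem_ofPred_eq, not_or, not_not] at h
    exact hi (h.1.trans h.2.symm)

instance [Finite A] {S : Set (Fin d → ℤ)} [Finite S] : Finite (Rst d A q S) :=
  Subtype.finite

lemma restr_eq_restr_iff {S : Set (Fin d → ℤ)} {x y : Cf d A q} :
    restr S x = restr S y ↔ Set.EqOn x.1 y.1 S := by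
  refine ⟨fun h i hi => congrArg (fun u : Rst d A q S => u.1 ⟨i, hi⟩) h, fun h => ?_⟩
  exact Subtype.ext (funext fun i => h i.2)

lemma glue_apply_of_mem {S : Set (Fin d → ℤ)} (u : Rst d A q S) (v : Rst d A q Sᶜ)
    {i : Fin d → ℤ} (h : i ∈ S) : (glue u v).1 i = u.1 ⟨i, h⟩ := dif_pos h

lemma glue_apply_of_notMem {S : Set (Fin d → ℤ)} (u : Rst d A q S) (v : Rst d A q Sᶜ)
    {i : Fin d → ℤ} (h : i ∉ S) : (glue u v).1 i = v.1 ⟨i, h⟩ := dif_neg h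

lemma restr_glue {S : Set (Fin d → ℤ)} (u : Rst d A q S) (v : Rst d A q Sᶜ) :
    restr S (glue u v) = u :=
  Subtype.ext (funext fun i => glue_apply_of_mem u v i.2)

lemma restr_compl_glue {S : Set (Fin d → ℤ)} (u : Rst d A q S) (v : Rst d A q Sᶜ) :
    restr Sᶜ (glue u v) = v :=
  Subtype.ext (funext fun i => glue_apply_of_notMem u v i.2)

lemma glue_restr (S : Set (Fin d → ℤ)) (c : Cf d A q) : glue (restr S c) (restr Sᶜ c) = c := by
  refine Subtype.ext (funext fun i => ?_)
  by_cases h : i ∈ S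
  · exact glue_apply_of_mem _ _ h
  · exact glue_apply_of_notMem _ _ h

lemma glue_eq_iff {S : Set (Fin d → ℤ)} {u : Rst d A q S} {v : Rst d A q Sᶜ} {c : Cf d A q} :
    glue u v = c ↔ restr S c = u ∧ restr Sᶜ c = v := by
  constructor
  · rintro rfl
    exact ⟨restr_glue u v, restr_compl_glue u v⟩
  · rintro ⟨rfl, rfl⟩
    exact glue_restr S c

lemma glue_injective {S : Set (Fin d → ℤ)} :
    Function.Injective fun t : Rst d A q S × Rst d A q Sᶜ => glue t.1 t.2 := by
  rintro ⟨w, v⟩ ⟨w', v'⟩ (h : glue w v = glue w' v')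
  have h' := glue_eq_iff.1 h
  rw [restr_glue, restr_compl_glue] at h'
  rw [h'.1, h'.2]

lemma eqOn_glue_of_eqOn {S T : Set (Fin d → ℤ)} {w w' : Rst d A q S} {v₀ : Rst d A q Sᶜ}
    (h : Set.EqOn (glue w v₀).1 (glue w' v₀).1 T) (v₁ : Rst d A q Sᶜ) :
    Set.EqOn (glue w v₁).1 (glue w' v₁).1 T := by
  intro i hi
  by_cases hS : i ∈ S
  · simpa only [glue_apply_of_mem _ _ hS] using h hi
  · rw [glue_apply_of_notMem _ _ hS, glue_apply_of_notMem _ _ hS]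

end Configurations

lemma tsum_prod_of_finite_left {α β γ : Type*} [AddCommMonoid α] [TopologicalSpace α]
    [ContinuousAdd α] [T2Space α] [Finite β] {f : β × γ → α}
    (hf : ∀ b, Summable fun c => f (b, c)) : ∑' p, f p = ∑' b, ∑' c, f (b, c) := by
  cases nonempty_fintype β
  have hslice (b : β) : HasSum (fun p : β × γ => if p.1 = b then f p else 0) (∑' c, f (b, c)) := by
    refine ((Prod.mk_right_injective b).hasSum_iff fun p hp => if_neg ?_).1 ?_
    · rintro rfl
      exact hp ⟨p.2, rfl⟩
    · simpa [Function.comp_def] using (hf b).hasSum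
  have h := hasSum_sum fun b (_ : b ∈ Finset.univ) => hslice b
  simp only [Finset.sum_ite_eq, Finset.mem_univ, if_true] at h
  rw [h.tsum_eq, tsum_fintype]

section SquareSummable

variable {ι κ : Type*}

lemma lp.hasSum_norm_sq (ψ : ℓ²(ι, ℂ)) : HasSum (fun i => ‖ψ i‖ ^ 2) (‖ψ‖ ^ 2) := by
  simpa using lp.hasSum_norm (p := 2) (by norm_num) ψ

lemma lp.summable_norm_sq_comp (ψ : ℓ²(ι, ℂ)) {j : κ → ι} (hj : Function.Injective j) :
    Summable fun t => ‖ψ (j t)‖ ^ 2 :=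
  (lp.hasSum_norm_sq ψ).summable.comp_injective hj

lemma lp.tsum_norm_sq_comp_le (ψ : ℓ²(ι, ℂ)) {j : κ → ι} (hj : Function.Injective j) :
    ∑' t, ‖ψ (j t)‖ ^ 2 ≤ ‖ψ‖ ^ 2 :=
  calc ∑' t, ‖ψ (j t)‖ ^ 2 ≤ ∑' i, ‖ψ i‖ ^ 2 :=
        Summable.tsum_le_tsum_of_inj j hj (fun _ _ => sq_nonneg _) (fun _ => le_rfl)
          (lp.summable_norm_sq_comp ψ hj) (lp.hasSum_norm_sq ψ).summable
    _ = ‖ψ‖ ^ 2 := (lp.hasSum_norm_sq ψ).tsum_eq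

lemma norm_mul_conj_le (a b : ℂ) : ‖a * conj b‖ ≤ (‖a‖ ^ 2 + ‖b‖ ^ 2) / 2 := by
  rw [norm_mul, RCLike.norm_conj]
  nlinarith [sq_nonneg (‖a‖ - ‖b‖)]

lemma lp.summable_mul_conj_comp (ψ : ℓ²(ι, ℂ)) {j₁ j₂ : κ → ι} (h₁ : Function.Injective j₁)
    (h₂ : Function.Injective j₂) : Summable fun t => ψ (j₁ t) * conj (ψ (j₂ t)) :=
  .of_norm_bounded
    (((lp.summable_norm_sq_comp ψ h₁).add (lp.summable_norm_sq_comp ψ h₂)).div_const 2)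
    fun _ => norm_mul_conj_le _ _

lemma lp.norm_tsum_mul_conj_comp_le (ψ : ℓ²(ι, ℂ)) {j₁ j₂ : κ → ι} (h₁ : Function.Injective j₁)
    (h₂ : Function.Injective j₂) : ‖∑' t, ψ (j₁ t) * conj (ψ (j₂ t))‖ ≤ ‖ψ‖ ^ 2 := by
  have hs₁ := lp.summable_norm_sq_comp ψ h₁
  have hs₂ := lp.summable_norm_sq_comp ψ h₂
  calc ‖∑' t, ψ (j₁ t) * conj (ψ (j₂ t))‖
      ≤ ∑' t, (‖ψ (j₁ t)‖ ^ 2 + ‖ψ (j₂ t)‖ ^ 2) / 2 :=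
        tsum_of_norm_bounded ((hs₁.add hs₂).div_const 2).hasSum fun _ => norm_mul_conj_le _ _
    _ = (∑' t, ‖ψ (j₁ t)‖ ^ 2 + ∑' t, ‖ψ (j₂ t)‖ ^ 2) / 2 := by
        rw [tsum_div_const, hs₁.tsum_add hs₂]
    _ ≤ ‖ψ‖ ^ 2 := by
        linarith [lp.tsum_norm_sq_comp_le ψ h₁, lp.tsum_norm_sq_comp_le ψ h₂]

end SquareSummable

section Linearization

variable {ι ι' : Type*} {F : ι → ι'} {G : ℓ²(ι, ℂ) →L[ℂ] ℓ²(ι', ℂ)}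

lemma hasSum_apply_of_map_single (hG : ∀ c, G (lp.single 2 c 1) = lp.single 2 (F c) 1)
    (ψ : ℓ²(ι, ℂ)) (c' : ι') : HasSum (fun c => if F c = c' then ψ c else 0) (G ψ c') := by
  have h := ((lp.hasSum_single (by norm_num) ψ).mapL G).mapL (lp.evalCLM ℂ _ 2 c')
  have hsingle (c : ι) : lp.single 2 c (ψ c) = ψ c • lp.single (E := fun _ : ι => ℂ) 2 c 1 := by
    rw [← lp.single_smul, smul_eq_mul, mul_one]
  simpa [lp.evalCLM, hsingle, hG, Pi.single_apply, eq_comm] using h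

lemma apply_apply_eq_of_map_single (hF : Function.Injective F)
    (hG : ∀ c, G (lp.single 2 c 1) = lp.single 2 (F c) 1) (ψ : ℓ²(ι, ℂ)) (x : ι) :
    G ψ (F x) = ψ x :=
  (hasSum_apply_of_map_single hG ψ (F x)).unique <| by
    convert hasSum_ite_eq x (ψ x) using 1
    funext c
    by_cases hc : c = x <;> simp [hc, hF.eq_iff]

lemma apply_apply_eq_zero_of_map_single (hG : ∀ c, G (lp.single 2 c 1) = lp.single 2 (F c) 1)
    (ψ : ℓ²(ι, ℂ)) {c' : ι'} (h : c' ∉ Set.range F) : G ψ c' = 0 :=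
  (hasSum_apply_of_map_single hG ψ c').unique <| by
    convert (hasSum_zero : HasSum (fun _ : ι => (0 : ℂ)) 0) using 1
    funext c
    exact if_neg fun hc => h ⟨c, hc⟩

end Linearization

section Reductions

lemma State.norm_sq_eq_one {H : Type} [NormedAddCommGroup H] [InnerProductSpace ℂ H]
    (ρ : State H) {k : ℕ} (hk : ρ.p k ≠ 0) : ‖ρ.ψ k‖ ^ 2 = 1 := by
  have h := ρ.ortho k k hk hk
  rw [if_pos rfl] at h
  rw [← inner_self_eq_norm_sq (𝕜 := ℂ), h, RCLike.one_re]

def State.pure {H : Type} [NormedAddCommGroup H] [InnerProductSpace ℂ H] (φ : H)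
    (hφ : ‖φ‖ = 1) : State H where
  ψ _ := φ
  p k := if k = 0 then 1 else 0
  nonneg k := by split_ifs <;> norm_num
  sum_one := hasSum_ite_eq 0 1
  ortho j k hj hk := by
    obtain rfl : j = 0 := by_contra fun h => hj (if_neg h)
    obtain rfl : k = 0 := by_contra fun h => hk (if_neg h)
    simp [inner_self_eq_norm_sq_to_K, hφ]

variable {d : ℕ} {A : Type} {q : A}

def pureReduct (ψ : Hd d A q) (S : Set (Fin d → ℤ)) (u u' : Rst d A q S) : ℂ :=
  ∑' v : Rst d A q Sᶜ, ψ (glue u v) * conj (ψ (glue u' v))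

lemma redFam_apply (p : ℕ → ℝ) (ψ : ℕ → Hd d A q) (S : Set (Fin d → ℤ)) (u u' : Rst d A q S) :
    redFam p ψ S u u' = ∑' k, (p k : ℂ) * pureReduct (ψ k) S u u' :=
  rfl

lemma redFam_const {p : ℕ → ℝ} (hp : HasSum p 1) (φ : Hd d A q) (S : Set (Fin d → ℤ)) :
    redFam p (fun _ => φ) S = pureReduct φ S := by
  funext u u'
  rw [redFam_apply, ((Complex.hasSum_ofReal.2 hp).mul_right _).tsum_eq, Complex.ofReal_one, one_mul]

lemma reduct_pure (φ : Hd d A q) (hφ : ‖φ‖ = 1) (S : Set (Fin d → ℤ)) :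
    reduct (State.pure φ hφ) S = pureReduct φ S :=
  redFam_const (State.pure φ hφ).sum_one φ S

lemma redApply_pure (G : Hd d A q →L[ℂ] Hd d A q) (φ : Hd d A q) (hφ : ‖φ‖ = 1)
    (S : Set (Fin d → ℤ)) : redApply G (State.pure φ hφ) S = pureReduct (G φ) S :=
  redFam_const (State.pure φ hφ).sum_one (G φ) S

lemma glue_right_injective {S : Set (Fin d → ℤ)} (u : Rst d A q S) :
    Function.Injective (glue (q := q) u) :=
  glue_injective.comp (Prod.mk_right_injective u)

lemma norm_pureReduct_le (ψ : Hd d A q) (S : Set (Fin d → ℤ)) (u u' : Rst d A q S) :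
    ‖pureReduct ψ S u u'‖ ≤ ‖ψ‖ ^ 2 :=
  lp.norm_tsum_mul_conj_comp_le ψ (glue_right_injective u) (glue_right_injective u')

lemma State.summable_mul_pureReduct (ρ : State (Hd d A q)) (S : Set (Fin d → ℤ))
    (u u' : Rst d A q S) : Summable fun k => (ρ.p k : ℂ) * pureReduct (ρ.ψ k) S u u' := by
  refine .of_norm_bounded ρ.sum_one.summable fun k => ?_
  rw [norm_mul, Complex.norm_real, Real.norm_of_nonneg (ρ.nonneg k)]
  by_cases hk : ρ.p k = 0
  · simp [hk]
  calc ρ.p k * ‖pureReduct (ρ.ψ k) S u u'‖ ≤ ρ.p k * ‖ρ.ψ k‖ ^ 2 :=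
        mul_le_mul_of_nonneg_left (norm_pureReduct_le _ S u u') (ρ.nonneg k)
    _ = ρ.p k := by rw [ρ.norm_sq_eq_one hk, mul_one]

lemma redApply_eq_tsum_reduct {G : Hd d A q →L[ℂ] Hd d A q} {𝒜 S : Set (Fin d → ℤ)}
    [Finite (Rst d A q S)] {u u' : Rst d A q 𝒜} {c : Rst d A q S × Rst d A q S → ℂ}
    (hG : ∀ ψ, pureReduct (G ψ) 𝒜 u u' = ∑' t, c t * pureReduct ψ S t.1 t.2)
    (ρ : State (Hd d A q)) : redApply G ρ 𝒜 u u' = ∑' t, c t * reduct ρ S t.1 t.2 := by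
  cases nonempty_fintype (Rst d A q S × Rst d A q S)
  simp only [redApply, reduct, redFam_apply, hG, tsum_fintype, Finset.mul_sum, ← tsum_mul_left]
  rw [Summable.tsum_finsetSum fun t _ => ?_]
  · exact Finset.sum_congr rfl fun t _ => tsum_congr fun k => mul_left_comm _ _ _
  · simpa only [mul_left_comm (c t)] using (ρ.summable_mul_pureReduct S t.1 t.2).mul_left (c t)

end Reductions

section Superpositions

variable {d : ℕ} {A : Type} {q : A}

lemma e_apply (c c' : Cf d A q) : e c c' = if c' = c then 1 else 0 := by
  simp [e, Pi.single_apply]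

lemma conj_e_apply (c c' : Cf d A q) : conj (e c c') = e c c' := by
  rw [e_apply]
  split_ifs <;> simp

lemma norm_e (c : Cf d A q) : ‖e c‖ = 1 := by
  rw [e, lp.norm_single (by norm_num), norm_one]

lemma smul_e_add_smul_e_apply (α β : ℂ) (x y c : Cf d A q) :
    (α • e x + β • e y) c = α * e x c + β * e y c :=
  rfl

lemma norm_smul_e_add_smul_e_sq {x y : Cf d A q} (hxy : x ≠ y) (α β : ℂ) :
    ‖α • e x + β • e y‖ ^ 2 = ‖α‖ ^ 2 + ‖β‖ ^ 2 := by
  have horth : inner ℂ (α • e x) (β • e y) = 0 := by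
    simp [e, lp.inner_single_left, Ne.symm hxy]
  rw [sq, sq, sq, norm_add_sq_eq_norm_sq_add_norm_sq_of_inner_eq_zero _ _ horth, norm_smul,
    norm_smul, norm_e, norm_e, mul_one, mul_one]

lemma e_apply_glue_mul_e_apply_glue {S : Set (Fin d → ℤ)} {x y : Cf d A q}
    (hxy : restr Sᶜ x ≠ restr Sᶜ y) (u u' : Rst d A q S) (v : Rst d A q Sᶜ) :
    e x (glue u v) * e y (glue u' v) = 0 := by
  simp only [e_apply, mul_ite, mul_one, mul_zero, ite_eq_right_iff]
  rintro rfl rfl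
  exact absurd (by rw [restr_compl_glue, restr_compl_glue]) hxy

/-- Off-diagonal coherences between configurations that differ outside `S` are invisible
in the reduction to `S`. -/
lemma pureReduct_smul_e_add_neg_smul_e {S : Set (Fin d → ℤ)} {x y : Cf d A q}
    (hxy : restr Sᶜ x ≠ restr Sᶜ y) (α β : ℂ) :
    pureReduct (α • e x + (-β) • e y) S = pureReduct (α • e x + β • e y) S := by
  funext u u'
  refine tsum_congr fun v => ?_
  have h₁ := e_apply_glue_mul_e_apply_glue hxy u u' v
  have h₂ := e_apply_glue_mul_e_apply_glue (Ne.symm hxy) u u' v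
  simp only [smul_e_add_smul_e_apply, map_add, map_mul, map_neg, conj_e_apply]
  linear_combination (-2 * α * conj β) * h₁ - (2 * β * conj α) * h₂

lemma pureReduct_smul_e_add_smul_e_restr {𝒜 : Set (Fin d → ℤ)} {x y : Cf d A q} (hxy : x ≠ y)
    (hoff : restr 𝒜ᶜ x = restr 𝒜ᶜ y) (α β : ℂ) :
    pureReduct (α • e x + β • e y) 𝒜 (restr 𝒜 x) (restr 𝒜 y) = α * conj β := by
  have hy : glue (restr 𝒜 y) (restr 𝒜ᶜ x) = y := by rw [hoff, glue_restr]
  rw [pureReduct, tsum_eq_single (restr 𝒜ᶜ x)]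
  · simp [smul_e_add_smul_e_apply, glue_restr, hy, e_apply, hxy, Ne.symm hxy]
  · intro v hv
    have hx : glue (restr 𝒜 x) v ≠ x := fun h => hv (glue_eq_iff.1 h).2.symm
    have hy' : glue (restr 𝒜 x) v ≠ y := fun h => hxy <| by
      rw [← glue_restr 𝒜 x, ← glue_restr 𝒜 y, (glue_eq_iff.1 h).1, hoff]
    simp [smul_e_add_smul_e_apply, e_apply, hx, hy']

end Superpositions

section Forward

variable {d : ℕ} {A : Type} {q : A} {F : Cf d A q → Cf d A q} {G : Hd d A q →L[ℂ] Hd d A q}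

lemma restr_compl_eq_of_localAt (hG : ∀ c, G (e c) = e (F c)) {𝒜 𝒩 : Set (Fin d → ℤ)}
    (hloc : LocalAt G 𝒜 𝒩) {x y : Cf d A q} (hne : F x ≠ F y)
    (hoff : restr 𝒜ᶜ (F x) = restr 𝒜ᶜ (F y)) : restr (𝒜 + 𝒩)ᶜ x = restr (𝒜 + 𝒩)ᶜ y := by
  by_contra hS
  have hxy : x ≠ y := fun h => hne (congrArg F h)
  set α : ℂ := (((Real.sqrt 2)⁻¹ : ℝ) : ℂ)
  have hα : ‖α‖ ^ 2 + ‖α‖ ^ 2 = 1 := by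
    simp only [α, Complex.norm_real, norm_inv, Real.norm_eq_abs, inv_pow, sq_abs,
      Real.sq_sqrt (zero_le_two : (0 : ℝ) ≤ 2)]
    norm_num
  have hunit (β : ℂ) (hβ : ‖α‖ ^ 2 + ‖β‖ ^ 2 = 1) : ‖α • e x + β • e y‖ = 1 := by
    rw [← pow_eq_one_iff_of_nonneg (norm_nonneg _) two_ne_zero, norm_smul_e_add_smul_e_sq hxy, hβ]
  have hGφ (β : ℂ) : G (α • e x + β • e y) = α • e (F x) + β • e (F y) := by
    rw [map_add, map_smul, map_smul, hG, hG]
  have key := congrFun₂ (hloc (.pure _ (hunit α hα)) (.pure _ (hunit (-α) (by rwa [norm_neg])))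
    (by rw [reduct_pure, reduct_pure, pureReduct_smul_e_add_neg_smul_e hS]))
    (restr 𝒜 (F x)) (restr 𝒜 (F y))
  rw [redApply_pure, redApply_pure, hGφ, hGφ, pureReduct_smul_e_add_smul_e_restr hne hoff,
    pureReduct_smul_e_add_smul_e_restr hne hoff, map_neg, mul_neg, eq_neg_iff_add_eq_zero,
    ← two_mul, mul_eq_zero, mul_eq_zero, map_eq_zero] at key
  have hα0 : α ≠ 0 := by
    rintro h
    simp [h] at hα
  simp [hα0] at key

lemma reversible_of_localAt (hinj : Function.Injective F) (hG : ∀ c, G (e c) = e (F c))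
    {𝒩 : Set (Fin d → ℤ)} (h𝒩 : 𝒩.Finite)
    (hloc : ∀ 𝒜 : Set (Fin d → ℤ), 𝒜.Finite → LocalAt G 𝒜 𝒩) : Reversible F := by
  refine ⟨-𝒩, h𝒩.neg, fun x y i hi => ?_⟩
  by_cases hxy : F x = F y
  · rw [hinj hxy]
  set 𝒜 := {j | (F x).1 j ≠ (F y).1 j}
  have hoff : restr 𝒜ᶜ (F x) = restr 𝒜ᶜ (F y) := restr_eq_restr_iff.2 fun j hj => not_not.1 hj
  refine restr_eq_restr_iff.1
    (restr_compl_eq_of_localAt hG (hloc 𝒜 (Cf.finite_setOf_ne _ _)) hxy hoff) fun hiS => ?_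
  obtain ⟨a, ha, n, hn, rfl⟩ := Set.mem_add.1 hiS
  exact ha (by simpa using hi (-n) (by simpa using hn))

end Forward

section Backward

variable {d : ℕ} {A : Type} {q : A} {F : Cf d A q → Cf d A q} {G : Hd d A q →L[ℂ] Hd d A q}

def HasNeighbourhood (F : Cf d A q → Cf d A q) (N : Set (Fin d → ℤ)) : Prop :=
  ∀ x y : Cf d A q, ∀ i, (∀ n ∈ N, x.1 (i + n) = y.1 (i + n)) → (F x).1 i = (F y).1 i

def HasInverseNeighbourhood (F : Cf d A q → Cf d A q) (N : Set (Fin d → ℤ)) : Prop :=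
  ∀ x y : Cf d A q, ∀ i, (∀ n ∈ N, (F x).1 (i + n) = (F y).1 (i + n)) → x.1 i = y.1 i

lemma IsCA.exists_hasNeighbourhood (hCA : IsCA F) : ∃ N, N.Finite ∧ HasNeighbourhood F N := by
  obtain ⟨N, hN, f, -, hf⟩ := hCA
  refine ⟨N, hN, fun x y i h => ?_⟩
  rw [hf, hf]
  exact congrArg f (funext fun n => h n n.2)

lemma HasNeighbourhood.apply_eq_of_eqOn {N T : Set (Fin d → ℤ)} (hF : HasNeighbourhood F N)
    {x y : Cf d A q} (h : Set.EqOn x.1 y.1 T) {i : Fin d → ℤ} (hi : ∀ n ∈ N, i + n ∈ T) :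
    (F x).1 i = (F y).1 i :=
  hF x y i fun n hn => h (hi n hn)

lemma HasInverseNeighbourhood.eqOn_compl_sub {N 𝒜 : Set (Fin d → ℤ)}
    (hF : HasInverseNeighbourhood F N) {x y : Cf d A q} (h : Set.EqOn (F x).1 (F y).1 𝒜ᶜ) :
    Set.EqOn x.1 y.1 (𝒜 - N)ᶜ := fun i hi =>
  hF x y i fun n hn => h fun hin => hi (by simpa using Set.sub_mem_sub hin hn)

/-- The pair `(x, y)` contributes `ψ x * conj (ψ y)` to the entry `(u, u')` of the reduction
of `G ψ` to `𝒜`. -/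
def ContributesTo (F : Cf d A q → Cf d A q) {𝒜 : Set (Fin d → ℤ)} (u u' : Rst d A q 𝒜)
    (x y : Cf d A q) : Prop :=
  restr 𝒜 (F x) = u ∧ restr 𝒜 (F y) = u' ∧ restr 𝒜ᶜ (F x) = restr 𝒜ᶜ (F y)

variable {𝒜 S NC NI : Set (Fin d → ℤ)} {u u' : Rst d A q 𝒜}

lemma ContributesTo.glue_eq {x y : Cf d A q} (h : ContributesTo F u u' x y) :
    glue u (restr 𝒜ᶜ (F x)) = F x ∧ glue u' (restr 𝒜ᶜ (F x)) = F y :=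
  ⟨glue_eq_iff.2 ⟨h.1, rfl⟩, glue_eq_iff.2 ⟨h.2.1, h.2.2.symm⟩⟩

lemma contributesTo_of_glue_eq {x y : Cf d A q} {v : Rst d A q 𝒜ᶜ} (hx : glue u v = F x)
    (hy : glue u' v = F y) : ContributesTo F u u' x y := by
  obtain ⟨hxu, hxv⟩ := glue_eq_iff.1 hx
  obtain ⟨hyu, hyv⟩ := glue_eq_iff.1 hy
  exact ⟨hxu, hyu, hxv.trans hyv.symm⟩

lemma ContributesTo.restr_compl_eq (hrev : HasInverseNeighbourhood F NI) (h₂ : 𝒜 - NI ⊆ S)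
    {x y : Cf d A q} (h : ContributesTo F u u' x y) : restr Sᶜ x = restr Sᶜ y :=
  restr_eq_restr_iff.2 <|
    (hrev.eqOn_compl_sub (restr_eq_restr_iff.1 h.2.2)).mono (Set.compl_subset_compl.2 h₂)

/-- Whether `(glue w v, glue w' v)` contributes does not depend on the configuration `v`
outside `S`: cells of `F` near `𝒜` only see `S`, and far from `𝒜` both images agree because,
by reversibility, `glue w v` and `glue w' v` agree near such cells. -/
lemma ContributesTo.glue_compl (hF : HasNeighbourhood F NC) (hrev : HasInverseNeighbourhood F NI)
    (h₁ : 𝒜 + NC ⊆ S) (h₃ : 𝒜 - NI - NC + NC ⊆ S) {w w' : Rst d A q S} {v₀ : Rst d A q Sᶜ}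
    (h : ContributesTo F u u' (glue w v₀) (glue w' v₀)) (v₁ : Rst d A q Sᶜ) :
    ContributesTo F u u' (glue w v₁) (glue w' v₁) := by
  obtain ⟨hu, hu', hoff⟩ := h
  have hS (w : Rst d A q S) {i} (hi : ∀ n ∈ NC, i + n ∈ S) :
      (F (glue w v₁)).1 i = (F (glue w v₀)).1 i :=
    hF.apply_eq_of_eqOn (fun j hj => by rw [glue_apply_of_mem _ _ hj, glue_apply_of_mem _ _ hj]) hi
  have h𝒜 {i} (hi : i ∈ 𝒜) : ∀ n ∈ NC, i + n ∈ S := fun n hn => h₁ (Set.add_mem_add hi hn)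
  refine ⟨?_, ?_, ?_⟩
  · exact hu ▸ restr_eq_restr_iff.2 fun i hi => hS w (h𝒜 hi)
  · exact hu' ▸ restr_eq_restr_iff.2 fun i hi => hS w' (h𝒜 hi)
  refine restr_eq_restr_iff.2 fun i hi => ?_
  by_cases hiS : ∀ n ∈ NC, i + n ∈ S
  · rw [hS w hiS, hS w' hiS]
    exact restr_eq_restr_iff.1 hoff hi
  obtain ⟨n, hn, hnS⟩ := not_forall₂.1 hiS
  have hxy := eqOn_glue_of_eqOn (hrev.eqOn_compl_sub (restr_eq_restr_iff.1 hoff)) v₁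
  refine hF.apply_eq_of_eqOn hxy fun n' hn' hmem => hnS (h₃ ?_)
  simpa using Set.add_mem_add (Set.sub_mem_sub hmem hn') hn

lemma pureReduct_apply_eq_tsum (hinj : Function.Injective F) (hG : ∀ c, G (e c) = e (F c))
    (ψ : Hd d A q) (u u' : Rst d A q 𝒜) :
    pureReduct (G ψ) 𝒜 u u' =
      ∑' p : Cf d A q × Cf d A q, (if ContributesTo F u u' p.1 p.2 then 1 else 0) *
        (ψ p.1 * conj (ψ p.2)) := by
  have hGF := apply_apply_eq_of_map_single hinj hG ψ
  have hmem {p : Cf d A q × Cf d A q} (hp : p ∈ Function.support fun p =>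
      (if ContributesTo F u u' p.1 p.2 then (1 : ℂ) else 0) * (ψ p.1 * conj (ψ p.2))) :
      ContributesTo F u u' p.1 p.2 := by
    by_contra hc
    simp [hc] at hp
  refine tsum_eq_tsum_of_ne_zero_bij (fun p => restr 𝒜ᶜ (F p.1.1)) ?_ ?_ ?_
  · rintro ⟨⟨x, y⟩, hp⟩ ⟨⟨x', y'⟩, hp'⟩ (hv : restr 𝒜ᶜ (F x) = restr 𝒜ᶜ (F x'))
    obtain ⟨hx, hy⟩ := (hmem hp).glue_eq
    obtain ⟨hx', hy'⟩ := (hmem hp').glue_eq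
    rw [hv] at hx hy
    simp only [Subtype.mk.injEq, Prod.mk.injEq]
    exact ⟨hinj (hx.symm.trans hx'), hinj (hy.symm.trans hy')⟩
  · intro v hv
    obtain ⟨x, hx⟩ : glue u v ∈ Set.range F := by
      by_contra h
      simp [apply_apply_eq_zero_of_map_single hG ψ h] at hv
    obtain ⟨y, hy⟩ : glue u' v ∈ Set.range F := by
      by_contra h
      simp [apply_apply_eq_zero_of_map_single hG ψ h] at hv
    refine ⟨⟨(x, y), ?_⟩, show restr 𝒜ᶜ (F x) = v by rw [hx, restr_compl_glue]⟩
    simpa [contributesTo_of_glue_eq hx.symm hy.symm, ← hx, ← hy, hGF] using hv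
  · rintro ⟨⟨x, y⟩, hp⟩
    obtain ⟨hx, hy⟩ := (hmem hp).glue_eq
    simp [hx, hy, hGF, hmem hp]

lemma tsum_eq_tsum_glue (g : Cf d A q × Cf d A q → ℂ)
    (hg : ∀ x y, g (x, y) ≠ 0 → restr Sᶜ x = restr Sᶜ y) :
    ∑' p, g p = ∑' t : (Rst d A q S × Rst d A q S) × Rst d A q Sᶜ,
      g (glue t.1.1 t.2, glue t.1.2 t.2) := by
  refine (Function.Injective.tsum_eq ?_ fun p hp => ?_).symm
  · rintro ⟨⟨w₁, w₁'⟩, v₁⟩ ⟨⟨w₂, w₂'⟩, v₂⟩ h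
    obtain ⟨h, h'⟩ := Prod.mk.inj h
    obtain ⟨rfl, rfl⟩ := Prod.mk.inj (glue_injective h)
    obtain ⟨rfl, -⟩ := Prod.mk.inj (glue_injective h')
    rfl
  · refine ⟨((restr S p.1, restr S p.2), restr Sᶜ p.1), Prod.ext (glue_restr S p.1) ?_⟩
    show glue (restr S p.2) (restr Sᶜ p.1) = p.2
    rw [hg p.1 p.2 hp, glue_restr]

lemma pureReduct_apply_eq_tsum_pureReduct [Finite (Rst d A q S)] (hinj : Function.Injective F)
    (hG : ∀ c, G (e c) = e (F c)) (hF : HasNeighbourhood F NC)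
    (hrev : HasInverseNeighbourhood F NI) (h₁ : 𝒜 + NC ⊆ S) (h₂ : 𝒜 - NI ⊆ S)
    (h₃ : 𝒜 - NI - NC + NC ⊆ S) (ψ : Hd d A q) (u u' : Rst d A q 𝒜) (v₀ : Rst d A q Sᶜ) :
    pureReduct (G ψ) 𝒜 u u' = ∑' t : Rst d A q S × Rst d A q S,
      (if ContributesTo F u u' (glue t.1 v₀) (glue t.2 v₀) then 1 else 0) *
        pureReduct ψ S t.1 t.2 := by
  have hv (t : Rst d A q S × Rst d A q S) (v : Rst d A q Sᶜ) :
      ContributesTo F u u' (glue t.1 v) (glue t.2 v) ↔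
        ContributesTo F u u' (glue t.1 v₀) (glue t.2 v₀) :=
    ⟨fun h => h.glue_compl hF hrev h₁ h₃ v₀, fun h => h.glue_compl hF hrev h₁ h₃ v⟩
  rw [pureReduct_apply_eq_tsum hinj hG, tsum_eq_tsum_glue (S := S) _ fun x y h =>
    ContributesTo.restr_compl_eq (u := u) (u' := u') hrev h₂ (by by_contra hc; simp [hc] at h),
    tsum_prod_of_finite_left fun t => ?_]
  · refine tsum_congr fun t => ?_
    simp only [hv t, pureReduct, ← tsum_mul_left]
  · simp only [hv t]
    exact (lp.summable_mul_conj_comp ψ (glue_right_injective t.1)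
      (glue_right_injective t.2)).mul_left _

lemma localAt_of_hasNeighbourhood [Finite A] {𝒩 : Set (Fin d → ℤ)}
    (hinj : Function.Injective F) (hG : ∀ c, G (e c) = e (F c)) (hF : HasNeighbourhood F NC)
    (hrev : HasInverseNeighbourhood F NI) (hfin : (𝒜 + 𝒩).Finite) (h₁ : 𝒜 + NC ⊆ 𝒜 + 𝒩)
    (h₂ : 𝒜 - NI ⊆ 𝒜 + 𝒩) (h₃ : 𝒜 - NI - NC + NC ⊆ 𝒜 + 𝒩) : LocalAt G 𝒜 𝒩 := by
  have := hfin.to_subtype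
  intro ρ ρ' h
  funext u u'
  simp only [redApply_eq_tsum_reduct (fun ψ => pureReduct_apply_eq_tsum_pureReduct hinj hG hF hrev
    h₁ h₂ h₃ ψ u u' ⟨fun _ => q, by simp⟩), h]

lemma uniformlyLocal_of_reversible [Finite A] (hCA : IsCA F) (hinj : Function.Injective F)
    (hG : ∀ c, G (e c) = e (F c)) (hrev : Reversible F) :
    ∃ 𝒩 : Set (Fin d → ℤ), 𝒩.Finite ∧ ∀ 𝒜 : Set (Fin d → ℤ), 𝒜.Finite → LocalAt G 𝒜 𝒩 := by
  obtain ⟨NC, hNC, hF⟩ := hCA.exists_hasNeighbourhood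
  obtain ⟨NI, hNI, hrev⟩ := hrev
  have h𝒩 : (NC ∪ -NI ∪ (-NI - NC + NC)).Finite :=
    (hNC.union hNI.neg).union ((hNI.neg.sub hNC).add hNC)
  refine ⟨_, h𝒩, fun 𝒜 h𝒜 => localAt_of_hasNeighbourhood hinj hG hF hrev (h𝒜.add h𝒩) ?_ ?_ ?_⟩
  · exact Set.add_subset_add_left (Set.subset_union_left.trans Set.subset_union_left)
  · rw [sub_eq_add_neg]
    exact Set.add_subset_add_left (Set.subset_union_right.trans Set.subset_union_left)
  · simp only [sub_eq_add_neg, add_assoc]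
    exact Set.add_subset_add_left Set.subset_union_right

end Backward

theorem quantization_uniformly_local_iff_reversible_general
    {d : ℕ} {A : Type} [Fintype A] {q : A}
    (F : Cf d A q → Cf d A q) (hCA : IsCA F) (hinj : Function.Injective F)
    (G : Hd d A q →L[ℂ] Hd d A q) (hG : ∀ c, G (e c) = e (F c)) :
    (∃ 𝒩 : Set (Fin d → ℤ), 𝒩.Finite ∧
      ∀ 𝒜 : Set (Fin d → ℤ), 𝒜.Finite → LocalAt G 𝒜 𝒩) ↔ Reversible F :=
  ⟨fun ⟨_, h𝒩, hloc⟩ => reversible_of_localAt hinj hG h𝒩 hloc,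
    uniformlyLocal_of_reversible hCA hinj hG⟩

/-- For an injective cellular automaton `F` on finite configurations in
dimension `d ≥ 1`, the linearization `F̃` (the continuous linear map `G` with
`G e_c = e_{F c}`) is uniformly local iff `F` is reversible. -/
theorem quantization_uniformly_local_iff_reversible
    {d : ℕ} (hd : 0 < d) {A : Type} [Fintype A] {q : A}
    (F : Cf d A q → Cf d A q) (hCA : IsCA F) (hinj : Function.Injective F)
    (G : Hd d A q →L[ℂ] Hd d A q) (hG : ∀ c, G (e c) = e (F c)) :
    (∃ 𝒩 : Set (Fin d → ℤ), 𝒩.Finite ∧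
      ∀ 𝒜 : Set (Fin d → ℤ), 𝒜.Finite → LocalAt G 𝒜 𝒩) ↔ Reversible F :=
  quantization_uniformly_local_iff_reversible_general F hCA hinj G hG

end
end

section
/- Let F be a cellular automaton on finite configurations in dimension d. If F is not injective, then for every natural number n there exists a finite configuration w such that the set {u ∈ C_f : F(u) = w} has at least n elements. -/
open scoped Pointwise ComplexConjugate
open Classical

noncomputable section

variable (d : ℕ) (A : Type) (q : A)

variable {d A q}

/-!
If `F x = F y` with `x ≠ y`, place translated copies of `x` or `y` so far apart that their
neighbourhoods do not interact: the image of the superposition does not depend on the choices,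
so numbers of common preimages multiply, and `k` copies give `2 ^ k` of them.
-/

theorem Set.Finite.exists_sub_notMem {G : Type*} [AddCommGroup G] [Infinite G] {E : Set G}
    (hE : E.Finite) : ∃ t : G, ∀ a ∈ E, a - t ∉ E := by
  obtain ⟨t, ht⟩ := (hE.sub hE).exists_notMem
  exact ⟨t, fun a ha hat => ht ⟨a, ha, a - t, hat, sub_sub_cancel a t⟩⟩

namespace Cf

def support (c : Cf d A q) : Set (Fin d → ℤ) := {i | c.1 i ≠ q}

theorem support_finite (c : Cf d A q) : c.support.Finite := c.2

@[ext]
theorem ext {c c' : Cf d A q} (h : ∀ i, c.1 i = c'.1 i) : c = c' :=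
  Subtype.ext (funext h)

theorem apply_eq_of_notMem_support {c : Cf d A q} {i : Fin d → ℤ} (h : i ∉ c.support) :
    c.1 i = q :=
  not_not.1 h

theorem apply_add_eq_of_notMem_support_sub {c : Cf d A q} {N : Set (Fin d → ℤ)}
    {i n : Fin d → ℤ} (h : i ∉ c.support - N) (hn : n ∈ N) : c.1 (i + n) = q :=
  apply_eq_of_notMem_support fun hc => h ⟨i + n, hc, n, hn, add_sub_cancel_right i n⟩

def translate (t : Fin d → ℤ) (c : Cf d A q) : Cf d A q :=
  ⟨fun i => c.1 (i - t), c.2.preimage sub_left_injective.injOn⟩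

theorem sub_mem_of_mem_support_translate_sub {c : Cf d A q} {N : Set (Fin d → ℤ)}
    {t i : Fin d → ℤ} (h : i ∈ (c.translate t).support - N) : i - t ∈ c.support - N := by
  obtain ⟨a, ha, n, hn, rfl⟩ := h
  exact ⟨a - t, ha, n, hn, (sub_right_comm a n t).symm⟩

theorem translate_injective (t : Fin d → ℤ) :
    Function.Injective (translate (A := A) (q := q) t) := fun c c' h =>
  ext fun i => by simpa [translate] using congrArg (fun c : Cf d A q => c.1 (i + t)) h

def overlay (c c' : Cf d A q) : Cf d A q :=
  ⟨fun i => if c.1 i = q then c'.1 i else c.1 i,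
    (c.2.union c'.2).subset fun i hi => by by_cases h : c.1 i = q <;> simp_all⟩

theorem overlay_apply_of_left {c c' : Cf d A q} {i : Fin d → ℤ} (h : c.1 i = q) :
    (c.overlay c').1 i = c'.1 i :=
  if_pos h

theorem overlay_apply_of_right {c c' : Cf d A q} {i : Fin d → ℤ} (h : c'.1 i = q) :
    (c.overlay c').1 i = c.1 i := by
  by_cases hc : c.1 i = q
  · exact (if_pos hc).trans (h.trans hc.symm)
  · exact if_neg hc

theorem eq_and_eq_of_overlay_eq {c₁ c₁' c₂ c₂' : Cf d A q} {P : Set (Fin d → ℤ)}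
    (h₁ : c₁.support ⊆ P) (h₁' : c₁'.support ⊆ P)
    (h₂ : Disjoint c₂.support P) (h₂' : Disjoint c₂'.support P)
    (h : c₁.overlay c₂ = c₁'.overlay c₂') : c₁ = c₁' ∧ c₂ = c₂' := by
  have h_apply (i) : (c₁.overlay c₂).1 i = (c₁'.overlay c₂').1 i := by rw [h]
  have left_eq {c : Cf d A q} (hc : c.support ⊆ P) {i} (hi : i ∉ P) : c.1 i = q :=
    apply_eq_of_notMem_support fun h => hi (hc h)
  have right_eq {c : Cf d A q} (hc : Disjoint c.support P) {i} (hi : i ∈ P) : c.1 i = q :=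
    apply_eq_of_notMem_support fun h => hc.notMem_of_mem_right hi h
  constructor <;> ext i <;> by_cases hi : i ∈ P
  · simpa only [overlay_apply_of_right (right_eq h₂ hi), overlay_apply_of_right (right_eq h₂' hi)]
      using h_apply i
  · rw [left_eq h₁ hi, left_eq h₁' hi]
  · rw [right_eq h₂ hi, right_eq h₂' hi]
  · simpa only [overlay_apply_of_left (left_eq h₁ hi), overlay_apply_of_left (left_eq h₁' hi)]
      using h_apply i

end Cf

def HasLocalRule (F : Cf d A q → Cf d A q) (N : Set (Fin d → ℤ)) (f : (N → A) → A) : Prop :=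
  ∀ c i, (F c).1 i = f fun n => c.1 (i + n.1)

namespace HasLocalRule

variable {F : Cf d A q → Cf d A q} {N : Set (Fin d → ℤ)} {f : (N → A) → A}

theorem apply_congr (hF : HasLocalRule F N f) {c c' : Cf d A q} {i : Fin d → ℤ}
    (h : ∀ n ∈ N, c.1 (i + n) = c'.1 (i + n)) : (F c).1 i = (F c').1 i := by
  rw [hF, hF]
  exact congrArg f (funext fun n => h n n.2)

theorem apply_eq_of_notMem_support_sub (hF : HasLocalRule F N f) (hfq : f (fun _ => q) = q)
    {c : Cf d A q} {i : Fin d → ℤ} (h : i ∉ c.support - N) : (F c).1 i = q := by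
  rw [hF]
  exact (congrArg f (funext fun n => c.apply_add_eq_of_notMem_support_sub h n.2)).trans hfq

theorem map_translate (hF : HasLocalRule F N f) (c : Cf d A q) (t : Fin d → ℤ) :
    F (c.translate t) = (F c).translate t := by
  ext i
  show (F (c.translate t)).1 i = (F c).1 (i - t)
  rw [hF, hF]
  exact congrArg f (funext fun n => congrArg c.1 (sub_add_eq_add_sub i t n.1).symm)

theorem map_overlay (hF : HasLocalRule F N f) (hfq : f (fun _ => q) = q) {c c' : Cf d A q}
    (h : Disjoint (c.support - N) (c'.support - N)) :
    F (c.overlay c') = (F c).overlay (F c') := by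
  ext i
  by_cases hi : i ∈ c.support - N
  · have hi' := h.notMem_of_mem_left hi
    rw [Cf.overlay_apply_of_right (hF.apply_eq_of_notMem_support_sub hfq hi')]
    exact hF.apply_congr fun n hn =>
      Cf.overlay_apply_of_right (c'.apply_add_eq_of_notMem_support_sub hi' hn)
  · rw [Cf.overlay_apply_of_left (hF.apply_eq_of_notMem_support_sub hfq hi)]
    exact hF.apply_congr fun n hn =>
      Cf.overlay_apply_of_left (c.apply_add_eq_of_notMem_support_sub hi hn)

end HasLocalRule

theorem IsCA.exists_preimages_card_mul (hd : 0 < d) {F : Cf d A q → Cf d A q}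
    (hCA : IsCA F) {s₁ s₂ : Finset (Cf d A q)} {w₁ w₂ : Cf d A q}
    (h₁ : ∀ u ∈ s₁, F u = w₁) (h₂ : ∀ v ∈ s₂, F v = w₂) :
    ∃ w : Cf d A q, ∃ s : Finset (Cf d A q),
      s.card = s₁.card * s₂.card ∧ ∀ u ∈ s, F u = w := by
  obtain ⟨N, hN, f, hfq, hF : HasLocalRule F N f⟩ := hCA
  have : Nonempty (Fin d) := ⟨⟨0, hd⟩⟩
  set S := ⋃ c ∈ s₁ ∪ s₂, c.support
  have hS : S.Finite := (s₁ ∪ s₂).finite_toSet.biUnion fun c _ => c.support_finite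
  set E := S ∪ (S - N)
  have hE {c} (hc : c ∈ s₁ ∪ s₂) : c.support ∪ (c.support - N) ⊆ E :=
    have hcS : c.support ⊆ S := Set.subset_iUnion₂ (s := fun c _ => Cf.support c) c hc
    Set.union_subset_union hcS (Set.sub_subset_sub_right hcS)
  obtain ⟨t, ht⟩ := (hS.union (hS.sub hN)).exists_sub_notMem
  have hu_sub {u} (hu : u ∈ s₁) : u.support ⊆ E :=
    Set.subset_union_left.trans (hE (Finset.mem_union_left _ hu))
  have hv_disj {v} (hv : v ∈ s₂) : Disjoint (v.translate t).support E :=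
    Set.disjoint_right.2 fun i hiE hi =>
      ht i hiE (hE (Finset.mem_union_right _ hv) (Or.inl hi))
  have h_sep {u v} (hu : u ∈ s₁) (hv : v ∈ s₂) :
      Disjoint (u.support - N) ((v.translate t).support - N) :=
    Set.disjoint_left.2 fun i hi hi' =>
      ht i (hE (Finset.mem_union_left _ hu) (Or.inr hi))
        (hE (Finset.mem_union_right _ hv) (Or.inr (Cf.sub_mem_of_mem_support_translate_sub hi')))
  refine ⟨w₁.overlay (w₂.translate t),
    (s₁ ×ˢ s₂).image fun p => p.1.overlay (p.2.translate t), ?_, ?_⟩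
  · rw [Finset.card_image_of_injOn, Finset.card_product]
    rintro ⟨u, v⟩ huv ⟨u', v'⟩ huv' h
    simp only [Finset.coe_product, Set.mem_prod, Finset.mem_coe] at huv huv'
    obtain ⟨rfl, hvv'⟩ := Cf.eq_and_eq_of_overlay_eq (hu_sub huv.1) (hu_sub huv'.1)
      (hv_disj huv.2) (hv_disj huv'.2) h
    rw [Cf.translate_injective t hvv']
  · simp only [Finset.mem_image, Finset.mem_product]
    rintro _ ⟨⟨u, v⟩, ⟨hu, hv⟩, rfl⟩
    rw [hF.map_overlay hfq (h_sep hu hv), hF.map_translate, h₁ u hu, h₂ v hv]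

theorem not_injective_CA_unbounded_preimages_general
    {d : ℕ} (hd : 0 < d) {A : Type} {q : A}
    (F : Cf d A q → Cf d A q) (hCA : IsCA F) (hninj : ¬ Function.Injective F) :
    ∀ n : ℕ, ∃ w : Cf d A q, ∃ s : Finset (Cf d A q),
      n ≤ s.card ∧ ∀ u ∈ s, F u = w := by
  obtain ⟨x, y, hxy, hne⟩ := Function.not_injective_iff.mp hninj
  have h_pow (k : ℕ) : ∃ w : Cf d A q, ∃ s : Finset (Cf d A q),
      2 ^ k ≤ s.card ∧ ∀ u ∈ s, F u = w := by
    induction k with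
    | zero => exact ⟨F x, {x}, by simp, by simp⟩
    | succ k ih =>
      obtain ⟨w, s, hcard, hs⟩ := ih
      obtain ⟨w', s', hcard', hs'⟩ := hCA.exists_preimages_card_mul hd hs
        (s₂ := {x, y}) (w₂ := F y) (by simp [hxy])
      refine ⟨w', s', ?_, hs'⟩
      rw [hcard', Finset.card_pair hne, pow_succ]
      exact Nat.mul_le_mul_right 2 hcard
  intro n
  obtain ⟨w, s, hcard, hs⟩ := h_pow n
  exact ⟨w, s, n.lt_two_pow_self.le.trans hcard, hs⟩

/-- if a cellular automaton `F` is not injective, then for every `n` there is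
a finite configuration having at least `n` preimages. -/
theorem not_injective_CA_unbounded_preimages
    {d : ℕ} (hd : 0 < d) {A : Type} [Fintype A] {q : A}
    (F : Cf d A q → Cf d A q) (hCA : IsCA F) (hninj : ¬ Function.Injective F) :
    ∀ n : ℕ, ∃ w : Cf d A q, ∃ s : Finset (Cf d A q),
      n ≤ s.card ∧ ∀ u ∈ s, F u = w :=
  not_injective_CA_unbounded_preimages_general hd F hCA hninj

end
end

section
/- Let F be a cellular automaton on finite configurations in dimension d. If F is not injective, then there is no continuous (bounded) linear map G : H → H satisfying G e_c = e_{F(c)} for all c ∈ C_f. -/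
open scoped Pointwise ComplexConjugate
open Classical

noncomputable section

variable (d : ℕ) (A : Type) (q : A)

variable {d A q}

/-! If `F c = F c'` with `c ≠ c'`, put `m` copies of `c` far apart and replace the `t`-th copy by
`c'`. Since every site sees at most one copy through the neighbourhood of `F`, these `m` distinct
configurations all have the same image `z`. A linearization `G` then sends the `m` orthonormal
vectors `e (x t)` to `e z`, so `G` maps their sum, of norm `√m`, to `m • e z`, and `‖G‖ ≥ √m`
for every `m`. -/

open Function

theorem Orthonormal.sqrt_card_mul_norm_le_opNorm {𝕜 E F ι : Type*} [RCLike 𝕜]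
    [NormedAddCommGroup E] [InnerProductSpace 𝕜 E] [NormedAddCommGroup F] [NormedSpace 𝕜 F]
    [Fintype ι] {v : ι → E} (hv : Orthonormal 𝕜 v) (T : E →L[𝕜] F) {y : F}
    (hT : ∀ i, T (v i) = y) : √(Fintype.card ι) * ‖y‖ ≤ ‖T‖ := by
  set n : ℝ := (Fintype.card ι : ℝ)
  have hsum : ‖∑ i, v i‖ = √n := by
    have h := hv.inner_sum (fun _ => (1 : 𝕜)) (fun _ => 1) Finset.univ
    simp only [one_smul, map_one, mul_one, Finset.sum_const, Finset.card_univ, nsmul_eq_mul,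
      inner_self_eq_norm_sq_to_K] at h
    rw [← Real.sqrt_sq (norm_nonneg _)]
    congr 1
    exact_mod_cast h
  have hT_sum : ‖T (∑ i, v i)‖ = n * ‖y‖ := by
    simp [map_sum, hT, n, RCLike.norm_nsmul 𝕜, nsmul_eq_mul]
  rcases (Real.sqrt_nonneg n).eq_or_lt with h0 | hpos
  · rw [← h0, zero_mul]; exact norm_nonneg T
  have key : √n * (√n * ‖y‖) ≤ √n * ‖T‖ := by
    calc √n * (√n * ‖y‖) = ‖T (∑ i, v i)‖ := by
          rw [hT_sum, ← mul_assoc, Real.mul_self_sqrt (Nat.cast_nonneg _)]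
      _ ≤ ‖T‖ * ‖∑ i, v i‖ := T.le_opNorm _
      _ = √n * ‖T‖ := by rw [hsum, mul_comm]
  exact le_of_mul_le_mul_left key hpos

theorem orthonormal_e : Orthonormal ℂ (e : Cf d A q → Hd d A q) := by
  convert (default : HilbertBasis (Cf d A q) ℂ (Hd d A q)).orthonormal
  ext c : 1
  rw [← HilbertBasis.repr_symm_single]; rfl

def DisjointTranslates (D : Set (Fin d → ℤ)) (u : Fin d → ℤ) : Prop :=
  ∀ a ∈ D, ∀ b ∈ D, ∀ j j' : ℕ, a + j • u = b + j' • u → j = j'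

theorem DisjointTranslates.mono {D D' : Set (Fin d → ℤ)} {u : Fin d → ℤ}
    (h : DisjointTranslates D u) (hD : D' ⊆ D) : DisjointTranslates D' u :=
  fun a ha b hb => h a (hD ha) b (hD hb)

theorem exists_disjointTranslates (hd : 0 < d) {D : Set (Fin d → ℤ)} (hD : D.Finite) :
    ∃ u, DisjointTranslates D u := by
  set k : Fin d := ⟨0, hd⟩
  obtain ⟨B, hB⟩ := (hD.image fun a => |a k|).bddAbove
  refine ⟨fun _ => 2 * B + 1, fun a ha b hb j j' hab => ?_⟩
  have hk : a k + j * (2 * B + 1) = b k + j' * (2 * B + 1) := by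
    simpa using congr_fun hab k
  have haB := abs_le.mp (hB ⟨a, ha, rfl⟩)
  have hbB := abs_le.mp (hB ⟨b, hb, rfl⟩)
  have hdiff : b k - a k = 0 :=
    Int.eq_zero_of_abs_lt_dvd (m := 2 * B + 1) ⟨j - j', by linear_combination -hk⟩
      (abs_lt.mpr ⟨by linarith, by linarith⟩)
  have hmul : ((j : ℤ) - j') * (2 * B + 1) = 0 := by linear_combination hk + hdiff
  have := (mul_eq_zero.mp hmul).resolve_right (by linarith)
  omega

-- Where translates of `K` overlap, `h.choose` picks one of the copies arbitrarily.
def patchwork (K : Set (Fin d → ℤ)) (u : Fin d → ℤ) (m : ℕ) (w : ℕ → Cf d A q) : Cf d A q :=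
  ⟨fun i => if h : ∃ j < m, i - j • u ∈ K then (w h.choose).1 (i - h.choose • u) else q, by
    refine ((Set.finite_Iio m).biUnion fun j _ => (w j).2.image (· + j • u)).subset ?_
    intro i hi
    simp only [Set.mem_ofPred_eq] at hi
    split_ifs at hi with h
    · exact Set.mem_biUnion h.choose_spec.1 ⟨_, hi, sub_add_cancel _ _⟩
    · exact absurd rfl hi⟩

section patchwork

variable {K : Set (Fin d → ℤ)} {u : Fin d → ℤ} {m : ℕ} {w : ℕ → Cf d A q}

theorem patchwork_apply_of_unique {i : Fin d → ℤ} {j : ℕ} (hj : j < m) (hi : i - j • u ∈ K)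
    (huniq : ∀ j' < m, i - j' • u ∈ K → j' = j) :
    (patchwork K u m w).1 i = (w j).1 (i - j • u) := by
  have h : ∃ j < m, i - j • u ∈ K := ⟨j, hj, hi⟩
  have hc : h.choose = j := huniq _ h.choose_spec.1 h.choose_spec.2
  change dite _ _ _ = _
  rw [dif_pos h, hc]

theorem patchwork_apply_add (hu : DisjointTranslates K u) {a : Fin d → ℤ} (ha : a ∈ K) {j : ℕ}
    (hj : j < m) : (patchwork K u m w).1 (a + j • u) = (w j).1 a := by
  rw [patchwork_apply_of_unique hj (by simpa using ha), add_sub_cancel_right]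
  exact fun j' _ hj' => hu _ hj' _ ha _ _ (sub_add_cancel _ _)

theorem patchwork_apply_of_forall_not_mem {i : Fin d → ℤ} (h : ∀ j < m, i - j • u ∉ K) :
    (patchwork K u m w).1 i = q :=
  dif_neg fun ⟨j, hj, hi⟩ => h j hj hi

theorem patchwork_apply_add_of_sub_mem_sub {N : Set (Fin d → ℤ)}
    (hu : DisjointTranslates (K - N) u) (hw : ∀ j, {i | (w j).1 i ≠ q} ⊆ K)
    {i n : Fin d → ℤ} {j : ℕ} (hj : j < m) (hi : i - j • u ∈ K - N) (hn : n ∈ N) :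
    (patchwork K u m w).1 (i + n) = (w j).1 (i - j • u + n) := by
  have huniq : ∀ j' < m, i + n - j' • u ∈ K → j' = j := fun j' _ hj' =>
    hu (i - j' • u) (by simpa [add_sub_right_comm] using Set.sub_mem_sub hj' hn) _ hi _ _
      (by simp)
  rw [sub_add_eq_add_sub]
  by_cases hK : i + n - j • u ∈ K
  · exact patchwork_apply_of_unique hj hK huniq
  · rw [patchwork_apply_of_forall_not_mem fun j' hj' hj'K => hK (huniq j' hj' hj'K ▸ hj'K)]
    exact (not_not.mp fun h => hK (hw j h)).symm

end patchwork

def IsLocalWith (F : Cf d A q → Cf d A q) (N : Set (Fin d → ℤ)) : Prop :=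
  ∀ x y i j, (∀ n ∈ N, x.1 (i + n) = y.1 (j + n)) → (F x).1 i = (F y).1 j

theorem IsCA.exists_isLocalWith {F : Cf d A q → Cf d A q} (hF : IsCA F) :
    ∃ N : Set (Fin d → ℤ), N.Finite ∧ 0 ∈ N ∧ IsLocalWith F N := by
  obtain ⟨N, hN, f, -, hf⟩ := hF
  refine ⟨insert 0 N, hN.insert 0, Set.mem_insert 0 N, fun x y i j hxy => ?_⟩
  rw [hf, hf]
  congr 1
  funext n
  exact hxy n (Set.mem_insert_of_mem 0 n.2)

theorem IsLocalWith.map_patchwork_eq {F : Cf d A q → Cf d A q} {N K : Set (Fin d → ℤ)}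
    {u : Fin d → ℤ} {m : ℕ} {w w' : ℕ → Cf d A q} (hF : IsLocalWith F N)
    (hu : DisjointTranslates (K - N) u) (hw : ∀ j, {i | (w j).1 i ≠ q} ⊆ K)
    (hw' : ∀ j, {i | (w' j).1 i ≠ q} ⊆ K) (hFw : ∀ j, F (w j) = F (w' j)) :
    F (patchwork K u m w) = F (patchwork K u m w') := by
  refine Subtype.ext (funext fun i => ?_)
  by_cases h : ∃ j < m, ∃ n ∈ N, i + n - j • u ∈ K
  · obtain ⟨j, hj, n₀, hn₀, hK⟩ := h
    have hi : i - j • u ∈ K - N := by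
      simpa [add_sub_right_comm] using Set.sub_mem_sub hK hn₀
    calc (F (patchwork K u m w)).1 i = (F (w j)).1 (i - j • u) :=
          hF _ _ _ _ fun n hn => patchwork_apply_add_of_sub_mem_sub hu hw hj hi hn
      _ = (F (w' j)).1 (i - j • u) := by rw [hFw]
      _ = (F (patchwork K u m w')).1 i :=
          (hF _ _ _ _ fun n hn => patchwork_apply_add_of_sub_mem_sub hu hw' hj hi hn).symm
  · push Not at h
    refine hF _ _ _ _ fun n hn => ?_
    rw [patchwork_apply_of_forall_not_mem (h · · n hn),
      patchwork_apply_of_forall_not_mem (h · · n hn)]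

theorem IsCA.exists_injective_fin_fiber (hd : 0 < d) {F : Cf d A q → Cf d A q} (hF : IsCA F)
    (hninj : ¬ Injective F) (m : ℕ) :
    ∃ (z : Cf d A q) (x : Fin m → Cf d A q), Injective x ∧ ∀ t, F (x t) = z := by
  obtain ⟨c, c', hFc, hne⟩ := not_injective_iff.mp hninj
  obtain ⟨i₀, hi₀⟩ : ∃ i, c.1 i ≠ c'.1 i := ne_iff.mp fun h => hne (Subtype.ext h)
  set K := {i | c.1 i ≠ q} ∪ {i | c'.1 i ≠ q}
  obtain ⟨N, hN, h0N, hloc⟩ := hF.exists_isLocalWith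
  obtain ⟨u, hu⟩ := exists_disjointTranslates hd ((c.2.union c'.2).sub hN)
  have huK : DisjointTranslates K u := hu.mono fun a ha => ⟨a, ha, 0, h0N, sub_zero a⟩
  have hi₀K : i₀ ∈ K := by
    by_contra h
    simp only [K, Set.mem_union, Set.mem_ofPred_eq, not_or, not_not] at h
    exact hi₀ (h.1.trans h.2.symm)
  let w (t j : ℕ) : Cf d A q := if j = t then c' else c
  have hwK : ∀ t j, {i | (w t j).1 i ≠ q} ⊆ K := by
    intro t j
    by_cases h : j = t
    · simp only [w, if_pos h]; exact Set.subset_union_right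
    · simp only [w, if_neg h]; exact Set.subset_union_left
  refine ⟨F (patchwork K u m fun _ => c), fun t => patchwork K u m (w t), fun t t' htt => ?_,
    fun t => hloc.map_patchwork_eq hu (hwK t) (fun _ => Set.subset_union_left) fun j => ?_⟩
  · have h := congr_arg (fun x : Cf d A q => x.1 (i₀ + (t : ℕ) • u)) htt
    simp only [patchwork_apply_add huK hi₀K t.2, w] at h
    by_contra htt'
    rw [if_neg (Fin.val_injective.ne htt')] at h
    exact hi₀ h.symm
  · by_cases h : j = t
    · simp only [w, if_pos h, hFc]
    · simp only [w, if_neg h]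

theorem not_injective_CA_no_bounded_linearization_general
    {d : ℕ} (hd : 0 < d) {A : Type} {q : A}
    (F : Cf d A q → Cf d A q) (hCA : IsCA F) (hninj : ¬ Function.Injective F) :
    ¬ ∃ G : Hd d A q →L[ℂ] Hd d A q, ∀ c, G (e c) = e (F c) := by
  rintro ⟨G, hG⟩
  obtain ⟨m, hm⟩ := exists_nat_gt (‖G‖ ^ 2)
  obtain ⟨z, x, hx, hxz⟩ := hCA.exists_injective_fin_fiber hd hninj m
  have hbound := (orthonormal_e.comp x hx).sqrt_card_mul_norm_le_opNorm G (y := e z) fun t => by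
    simp only [comp_apply, hG, hxz]
  rw [orthonormal_e.norm_eq_one, mul_one, Fintype.card_fin,
    Real.sqrt_le_left (norm_nonneg G)] at hbound
  linarith

/-- if a cellular automaton `F` is not injective, then there is no bounded
linear map `G` on `H` with `G e_c = e_{F c}` for all finite configurations `c`. -/
theorem not_injective_CA_no_bounded_linearization
    {d : ℕ} (hd : 0 < d) {A : Type} [Fintype A] {q : A}
    (F : Cf d A q → Cf d A q) (hCA : IsCA F) (hninj : ¬ Function.Injective F) :
    ¬ ∃ G : Hd d A q →L[ℂ] Hd d A q, ∀ c, G (e c) = e (F c) :=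
  not_injective_CA_no_bounded_linearization_general hd F hCA hninj

end
end

section
/- The map XOR_∞ : (ℤ → ZMod 2) → (ℤ → ZMod 2) defined by XOR_∞(x)(i) = x(i) + x(i+1) is an open map with respect to the product topology. -/
/-!
`XOR_∞` is an additive homomorphism with a continuous right inverse: the prefix sum
`n ↦ ∑_{i ∈ [min n 0, max n 0)} y i`, which needs no signs in characteristic two. The image of an
open set `U` is then the preimage of the open set `U + ker XOR_∞` under that right inverse.
-/

open Set Pointwise

theorem AddMonoidHom.image_eq_preimage_add_ker {G H : Type*} [AddGroup G] [AddGroup H]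
    (f : G →+ H) {s : H → G} (hs : Function.RightInverse s f) (U : Set G) :
    f '' U = s ⁻¹' (U + (f.ker : Set G)) := by
  ext y
  constructor
  · rintro ⟨x, hx, rfl⟩
    refine ⟨x, hx, -x + s (f x), ?_, add_neg_cancel_left _ _⟩
    simp [AddMonoidHom.mem_ker, hs (f x)]
  · rintro ⟨x, hx, k, hk, hxk⟩
    refine ⟨x, hx, ?_⟩
    rw [← hs y, ← hxk, map_add, f.mem_ker.1 hk, add_zero]

theorem AddMonoidHom.isOpenMap_of_continuous_rightInverse {G H : Type*} [AddGroup G]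
    [TopologicalSpace G] [IsTopologicalAddGroup G] [AddGroup H] [TopologicalSpace H]
    (f : G →+ H) {s : H → G} (hs_cont : Continuous s) (hs : Function.RightInverse s f) :
    IsOpenMap f := fun U hU => by
  rw [f.image_eq_preimage_add_ker hs]
  exact hU.add_right.preimage hs_cont

section

variable {R : Type*}

def xorInfty [AddCommMonoid R] : (ℤ → R) →+ (ℤ → R) where
  toFun x i := x i + x (i + 1)
  map_zero' := by ext; simp
  map_add' x y := by ext; simp only [Pi.add_apply]; abel

noncomputable def prefixSum [AddCommMonoid R] (y : ℤ → R) (n : ℤ) : R :=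
  ∑ i ∈ Finset.Ico (min n 0) (max n 0), y i

theorem prefixSum_add_prefixSum_succ [Ring R] [CharP R 2] (y : ℤ → R) (i : ℤ) :
    prefixSum y i + prefixSum y (i + 1) = y i := by
  unfold prefixSum
  rcases le_or_gt 0 i with hi | hi
  · rw [min_eq_right hi, max_eq_left hi, min_eq_right (by omega), max_eq_left (by omega),
      ← Finset.insert_Ico_right_eq_Ico_add_one hi, Finset.sum_insert (by simp),
      add_left_comm, CharTwo.add_self_eq_zero, add_zero]
  · rw [min_eq_left hi.le, max_eq_right hi.le, min_eq_left (by omega), max_eq_right (by omega),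
      ← Finset.insert_Ico_add_one_left_eq_Ico hi, Finset.sum_insert (by simp),
      add_assoc, CharTwo.add_self_eq_zero, add_zero]

theorem rightInverse_prefixSum [Ring R] [CharP R 2] :
    Function.RightInverse (prefixSum (R := R)) xorInfty :=
  fun y => funext (prefixSum_add_prefixSum_succ y)

theorem continuous_prefixSum [AddCommMonoid R] [TopologicalSpace R] [ContinuousAdd R] :
    Continuous (prefixSum (R := R)) :=
  continuous_pi fun _ => continuous_finsetSum _ fun i _ => continuous_apply i

end

/-- the map `XOR_∞` on full configurations `ℤ → ZMod 2`, defined by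
`XOR_∞(x)(i) = x(i) + x(i+1)`, is an open map for the product topology (`ZMod 2`
being discrete). -/
theorem xor_infty_isOpenMap :
    letI : TopologicalSpace (ZMod 2) := ⊥
    IsOpenMap (fun (x : ℤ → ZMod 2) (i : ℤ) => x i + x (i + 1)) := by
  let : TopologicalSpace (ZMod 2) := ⊥
  have : DiscreteTopology (ZMod 2) := ⟨rfl⟩
  exact (xorInfty (R := ZMod 2)).isOpenMap_of_continuous_rightInverse continuous_prefixSum
    rightInverse_prefixSum
end
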